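/- For every PL formula φ (i.e., a formula containing no unreliable connectives), the empty set entails φ in UCL (∅ ⊨_UCL φ) if and only if φ is a classical tautology, i.e., v ⊨ φ for every valuation v : X → {⊥,⊤}. -/

import Mathlib

namespace UCL

/-- The mode of a connective occurrence: the ideal (reliable) connective `c`,
its negated-output counterpart `c̄`, or its unreliable counterpart `c̃`. -/
inductive Mode where
  | ideal | negated | unreliable
deriving DecidableEq

/-- The binary connectives of the signature. -/
inductive BinConn where
  | and | or | imp | iff
deriving DecidableEq

/-- Formulas over the UCL signature `Σfc` and the set `X` of propositional
variables: constants, variables, negation family, binary connective families,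
and the `(3+2k)`-ary majority families (each in one of the three modes). -/
inductive Form (X : Type) where
  | verum : Form X
  | falsum : Form X
  | var : X → Form X
  | not : Mode → Form X → Form X
  | bin : BinConn → Mode → Form X → Form X → Form X
  | maj : (k : ℕ) → Mode → (Fin (3 + 2 * k) → Form X) → Form X

variable {X : Type}

/-- Output of a connective occurrence: negated-output counterparts negate. -/
def applyMode (m : Mode) (b : Bool) : Bool := if m = .negated then !b else b

def binSem : BinConn → Bool → Bool → Bool
  | .and, a, b => a && b
  | .or, a, b => a || b
  | .imp, a, b => !a || b
  | .iff, a, b => a == b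

/-- Classical satisfaction of a formula by a valuation (meaningful for PL
formulas; unreliable connectives are evaluated like their ideal versions). -/
def Form.eval (v : X → Bool) : Form X → Bool
  | .verum => true
  | .falsum => false
  | .var x => v x
  | .not m φ => applyMode m (!(φ.eval v))
  | .bin c m φ ψ => applyMode m (binSem c (φ.eval v) (ψ.eval v))
  | .maj k m f => applyMode m (decide (3 + 2 * k < 2 * ∑ i, ((f i).eval v).toNat))

/-- A PL formula: contains no unreliable connectives. -/
def Form.IsPL : Form X → Prop
  | .verum => True
  | .falsum => True
  | .var _ => True
  | .not m φ => m ≠ .unreliable ∧ φ.IsPL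
  | .bin _ m φ ψ => m ≠ .unreliable ∧ φ.IsPL ∧ ψ.IsPL
  | .maj _ m f => m ≠ .unreliable ∧ ∀ i, (f i).IsPL

/-- The outcome relation `φ ⊳ ψ` between PL formulas `φ` and c-formulas `ψ`. -/
inductive Outcome : Form X → Form X → Prop where
  | refl (φ : Form X) : φ.IsPL → Outcome φ φ
  | notC {m : Mode} {φ ψ : Form X} (hm : m ≠ .unreliable) :
      Outcome φ ψ → Outcome (.not m φ) (.not m ψ)
  | binC {c : BinConn} {m : Mode} {φ₁ φ₂ ψ₁ ψ₂ : Form X} (hm : m ≠ .unreliable) :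
      Outcome φ₁ ψ₁ → Outcome φ₂ ψ₂ → Outcome (.bin c m φ₁ φ₂) (.bin c m ψ₁ ψ₂)
  | majC {k : ℕ} {m : Mode} {f g : Fin (3 + 2 * k) → Form X} (hm : m ≠ .unreliable) :
      (∀ i, Outcome (f i) (g i)) → Outcome (.maj k m f) (.maj k m g)
  | notOk {φ ψ : Form X} : Outcome φ ψ → Outcome (.not .ideal φ) (.not .unreliable ψ)
  | notFail {φ ψ : Form X} : Outcome φ ψ → Outcome (.not .negated φ) (.not .unreliable ψ)
  | binOk {c : BinConn} {φ₁ φ₂ ψ₁ ψ₂ : Form X} :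
      Outcome φ₁ ψ₁ → Outcome φ₂ ψ₂ →
      Outcome (.bin c .ideal φ₁ φ₂) (.bin c .unreliable ψ₁ ψ₂)
  | binFail {c : BinConn} {φ₁ φ₂ ψ₁ ψ₂ : Form X} :
      Outcome φ₁ ψ₁ → Outcome φ₂ ψ₂ →
      Outcome (.bin c .negated φ₁ φ₂) (.bin c .unreliable ψ₁ ψ₂)
  | majOk {k : ℕ} {f g : Fin (3 + 2 * k) → Form X} :
      (∀ i, Outcome (f i) (g i)) → Outcome (.maj k .ideal f) (.maj k .unreliable g)
  | majFail {k : ℕ} {f g : Fin (3 + 2 * k) → Form X} :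
      (∀ i, Outcome (f i) (g i)) → Outcome (.maj k .negated f) (.maj k .unreliable g)

/-- The probability factor contributed by one connective occurrence:
the circuit connective has mode `m`, the outcome one mode `m'`. -/
noncomputable def modeFactor (m m' : Mode) : Polynomial ℝ :=
  match m, m' with
  | .unreliable, .ideal => Polynomial.X
  | .unreliable, .negated => 1 - Polynomial.X
  | .ideal, .ideal => 1
  | .negated, .negated => 1
  | _, _ => 0

/-- `Pν[ψ ▷ φ]`, written `prob ψ φ`: the probability polynomial of outcome `φ`
of the c-formula `ψ` (junk value `0` when `φ` is not an outcome of `ψ`). -/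
noncomputable def Form.prob [DecidableEq X] (ψ φ : Form X) : Polynomial ℝ :=
  match ψ, φ with
  | .verum, .verum => 1
  | .falsum, .falsum => 1
  | .var x, .var y => if x = y then 1 else 0
  | .not m ψ, .not m' φ => modeFactor m m' * ψ.prob φ
  | .bin c m ψ₁ ψ₂, .bin c' m' φ₁ φ₂ =>
      if c = c' then modeFactor m m' * (ψ₁.prob φ₁ * ψ₂.prob φ₂) else 0
  | .maj k m g, .maj k' m' f =>
      if h : k = k' then
        modeFactor m m' * ∏ i : Fin (3 + 2 * k), (g i).prob (f (Fin.cast (by omega) i))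
      else 0
  | _, _ => 0
termination_by structural ψ

/-- Number of occurrences of unreliable connectives in a formula. -/
def Form.unrelCount : Form X → ℕ
  | .verum => 0
  | .falsum => 0
  | .var _ => 0
  | .not m φ => (if m = .unreliable then 1 else 0) + φ.unrelCount
  | .bin _ m φ ψ => (if m = .unreliable then 1 else 0) + φ.unrelCount + ψ.unrelCount
  | .maj _ m f => (if m = .unreliable then 1 else 0) + ∑ i, (f i).unrelCount

/-- Number of occurrences of unreliable connectives of the c-formula `ψ` that
are replaced by their ideal counterparts in the outcome `φ` (junk value when
`φ` is not an outcome of `ψ`). -/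
def Form.idealRepl (ψ φ : Form X) : ℕ :=
  match ψ, φ with
  | .not m ψ, .not m' φ =>
      (if m = .unreliable ∧ m' = .ideal then 1 else 0) + ψ.idealRepl φ
  | .bin _ m ψ₁ ψ₂, .bin _ m' φ₁ φ₂ =>
      (if m = .unreliable ∧ m' = .ideal then 1 else 0) + ψ₁.idealRepl φ₁ + ψ₂.idealRepl φ₂
  | .maj k m g, .maj k' m' f =>
      (if m = .unreliable ∧ m' = .ideal then 1 else 0) +
        (if h : k = k' then ∑ i : Fin (3 + 2 * k), (g i).idealRepl (f (Fin.cast (by omega) i))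
         else 0)
  | _, _ => 0
termination_by structural ψ

/-- `P^v_ψ(ν)`: the aggregated probability, at reliability rate `ν`, of the
outcomes of `ψ` satisfied by the valuation `v`. -/
noncomputable def Pval [DecidableEq X] (v : X → Bool) (ψ : Form X) (ν : ℝ) : ℝ :=
  ∑ᶠ φ ∈ {φ : Form X | Outcome φ ψ ∧ φ.eval v = true}, (ψ.prob φ).eval ν

/-- `P^v_ψ` as a polynomial in `ℝ[ν]`. -/
noncomputable def Ppoly [DecidableEq X] (v : X → Bool) (ψ : Form X) : Polynomial ℝ :=
  ∑ᶠ φ ∈ {φ : Form X | Outcome φ ψ ∧ φ.eval v = true}, ψ.prob φ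

/-- An interpretation `I = (v, ρ)` of UCL. -/
structure Interp (X : Type) where
  v : X → Bool
  nu : ℝ
  mu : ℝ
  nu_gt : 1 / 2 < nu
  nu_le : nu ≤ 1
  mu_gt : 1 / 2 < mu
  mu_le : mu ≤ 1

/-- Satisfaction of a c-formula by an interpretation. -/
def satC [DecidableEq X] (I : Interp X) (ψ : Form X) : Prop :=
  I.mu ≤ Pval I.v ψ I.nu

/-- Satisfaction of the a-formula `μ ≤ P` (with `P` a polynomial in `ν` with
integer coefficients) by an interpretation. -/
def satA (I : Interp X) (P : Polynomial ℤ) : Prop :=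
  I.mu ≤ (P.map (Int.castRingHom ℝ)).eval I.nu

/-- `Γ ⊨_UCL ψ` for a finite set `Γ` of a-formulas and a c-formula `ψ`. -/
def entails [DecidableEq X] (Γ : List (Polynomial ℤ)) (ψ : Form X) : Prop :=
  ∀ I : Interp X, (∀ P ∈ Γ, satA I P) → satC I ψ

/-- UCL-satisfiability of a c-formula. -/
def UCLSat [DecidableEq X] (ψ : Form X) : Prop :=
  ∃ I : Interp X, satC I ψ

end UCL

/-! A PL formula has no unreliable connective to fail, so its only outcome is itself, with
probability `1`. Hence `P^v_φ` is the indicator of `v ⊨ φ`: the interpretation with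
`ν = μ = 1` forces `v ⊨ φ`, and conversely the indicator `1` dominates every `μ ≤ 1`. -/

namespace UCL

variable {X : Type}

theorem Outcome.eq_of_isPL {φ ψ : Form X} (h : Outcome φ ψ) (hψ : ψ.IsPL) : φ = ψ := by
  induction h with
  | refl => rfl
  | notC _ _ ih => rw [ih hψ.2]
  | binC _ _ _ ih₁ ih₂ => rw [ih₁ hψ.2.1, ih₂ hψ.2.2]
  | majC _ _ ih => rw [funext fun i => ih i (hψ.2 i)]
  | notOk | notFail | binOk | binFail | majOk | majFail => exact absurd rfl hψ.1

theorem outcome_iff_eq_of_isPL {φ ψ : Form X} (hψ : ψ.IsPL) : Outcome φ ψ ↔ φ = ψ :=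
  ⟨(·.eq_of_isPL hψ), fun h => h ▸ Outcome.refl ψ hψ⟩

theorem modeFactor_self {m : Mode} (hm : m ≠ .unreliable) : modeFactor m m = 1 := by
  cases m
  · rfl
  · rfl
  · exact absurd rfl hm

theorem Form.prob_self_of_isPL [DecidableEq X] {φ : Form X} (hφ : φ.IsPL) : φ.prob φ = 1 := by
  induction φ with
  | verum | falsum | var => simp [Form.prob]
  | not m ψ ih => simp [Form.prob, modeFactor_self hφ.1, ih hφ.2]
  | bin c m ψ₁ ψ₂ ih₁ ih₂ =>
    simp [Form.prob, modeFactor_self hφ.1, ih₁ hφ.2.1, ih₂ hφ.2.2]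
  | maj k m f ih =>
    rw [Form.prob, dif_pos rfl, modeFactor_self hφ.1, one_mul]
    exact Finset.prod_eq_one fun i _ => ih i (hφ.2 i)

theorem Pval_of_isPL [DecidableEq X] {φ : Form X} (hφ : φ.IsPL) (v : X → Bool) (ν : ℝ) :
    Pval v φ ν = if φ.eval v then 1 else 0 := by
  have hset : {ψ : Form X | Outcome ψ φ ∧ ψ.eval v = true} =
      if φ.eval v then {φ} else ∅ := by
    ext ψ
    simp only [outcome_iff_eq_of_isPL hφ]
    split_ifs with hv <;> aesop
  rw [Pval, hset]
  split_ifs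
  · rw [finsum_mem_singleton, Form.prob_self_of_isPL hφ, Polynomial.eval_one]
  · exact finsum_mem_empty

end UCL

open UCL in
/-- For every PL formula `φ` (containing no unreliable connectives),
`∅ ⊨_UCL φ` iff `φ` is a classical tautology. -/
theorem stmt9 {X : Type} [DecidableEq X] (φ : Form X) (h : φ.IsPL) :
    entails [] φ ↔ ∀ v : X → Bool, φ.eval v = true := by
  constructor
  · intro hent v
    have hsat := hent ⟨v, 1, 1, by norm_num, le_rfl, by norm_num, le_rfl⟩ (by simp)
    rw [satC, Pval_of_isPL h] at hsat
    by_contra hv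
    rw [if_neg hv] at hsat
    exact absurd hsat (by norm_num)
  · intro htaut I _
    rw [satC, Pval_of_isPL h, if_pos (htaut I.v)]
    exact I.mu_le
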